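/- Let K/k be a finite Galois extension of number fields with group G, S a G-stable set of places of K containing the Archimedean ones, and H ≤ G. Under the embedding ℤ[S(K^H)] → ℤ[S] sending a place 𝔭 of K^H to Σ_{𝔮|𝔭} f_𝔭 𝔮 (where f_𝔭 is the residue degree of 𝔭 in K/K^H), the index of I_{K^H,S} in (I_{K,S})^H equals n(H)/l(H), where n(H) = ∏_{𝔭 ∈ S(K^H)} f_𝔭 and l(H) = lcm{f_𝔭 : 𝔭 ∈ S(K^H)}. -/

import Mathlib

/-!
An `H`-fixed element of `ℤ[S]` is constant on `H`-orbits, i.e. a vector `c ∈ ℤ^{S(K^H)}`; it lies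
in `I_{K,S}` iff `Σ_𝔭 (|H| / f_𝔭) c_𝔭 = 0`, equivalently `Σ_𝔭 (l / f_𝔭) c_𝔭 = 0`, and it comes from
`I_{K^H,S}` iff `f_𝔭 ∣ c_𝔭` for every `𝔭`. Reducing `c_𝔭` modulo `f_𝔭` therefore identifies the
quotient with a subgroup of `∏_𝔭 ℤ/f_𝔭`, namely the kernel of `(r_𝔭) ↦ Σ_𝔭 (l / f_𝔭) r_𝔭 ∈ ℤ/l`.
This map is onto because the cofactors `l / f_𝔭` are coprime, so the kernel has order `∏_𝔭 f_𝔭 / l`.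
-/

open scoped TensorProduct

section Core

variable (G : Type) [Group G] [Fintype G]

/-- The `H`-fixed points of a `ℤ[G]`-module `M`, as a `ℤ`-submodule. -/
def fixedPts (M : Type) [AddCommGroup M] [DistribMulAction G M] (H : Subgroup G) :
    Submodule ℤ M where
  carrier := {x | ∀ h ∈ H, h • x = x}
  add_mem' := fun ha hb h hh => by rw [smul_add, ha h hh, hb h hh]
  zero_mem' := fun h hh => smul_zero h
  smul_mem' := fun n x hx h hh => by
    simpa [hx h hh] using (DistribMulAction.toAddMonoidHom M h).map_zsmul n x

/-- The permutation character of `ℚ[G/H]`, given by counting fixed points. -/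
noncomputable def permChar (H : Subgroup G) (g : G) : ℤ :=
  Nat.card {x : G ⧸ H // g • x = x}

/-- A Brauer relation: a formal `ℤ`-linear combination `Θ = Σ_H n_H · H` of subgroups of `G`
such that the virtual permutation representation `⊕_H ℚ[G/H]^{⊕ n_H}` is zero, i.e. such that
the corresponding linear combination of permutation characters vanishes. -/
noncomputable def IsBrauerRel (n : Subgroup G →₀ ℤ) : Prop :=
  ∀ g : G, ∑ H ∈ n.support, n H * permChar G H g = 0

/-- A family `v i` of elements of a submodule `S` whose images form a `ℤ`-basis
of `S` modulo torsion. -/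
def IsTorsionBasis {M : Type} [AddCommGroup M] {κ : Type} [Fintype κ]
    (S : Submodule ℤ M) (v : κ → M) : Prop :=
  (∀ i, v i ∈ S) ∧
  (∀ x ∈ S, ∃ c : κ → ℤ, x - ∑ i, c i • v i ∈ Submodule.torsion ℤ M) ∧
  (∀ c : κ → ℤ, (∑ i, c i • v i) ∈ Submodule.torsion ℤ M → c = 0)

/-- `G`-invariance of a bilinear pairing. -/
def IsGInvariant {M : Type} [AddCommGroup M] [DistribMulAction G M]
    (B : M →ₗ[ℤ] M →ₗ[ℤ] ℚ) : Prop :=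
  ∀ (g : G) (x y : M), B (g • x) (g • y) = B x y

/-- Non-degeneracy of a pairing on `M` modulo torsion. -/
def NondegModTorsion {M : Type} [AddCommGroup M] (B : M →ₗ[ℤ] M →ₗ[ℤ] ℚ) : Prop :=
  ∀ x : M, (∀ y : M, B x y = 0) → x ∈ Submodule.torsion ℤ M

/-- The regulator constant `C_Θ(M) = ∏_H det((1/|H|)⟨·,·⟩ | M^H/tors)^{n_H}`, computed with
respect to a pairing `B` and chosen families `v H` spanning `M^H` modulo torsion
(the Gram determinant does not depend on this choice). -/
noncomputable def regConst {M : Type} [AddCommGroup M] [DistribMulAction G M]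
    (B : M →ₗ[ℤ] M →ₗ[ℤ] ℚ) (n : Subgroup G →₀ ℤ)
    (ι : Subgroup G → Type) [∀ H, Fintype (ι H)] [∀ H, DecidableEq (ι H)]
    (v : ∀ H : Subgroup G, ι H → M) : ℚ :=
  ∏ H ∈ n.support,
    (Matrix.det (Matrix.of fun i j : ι H => (Nat.card H : ℚ)⁻¹ * B (v H i) (v H j))) ^ (n H)

end Core

open scoped Classical

attribute [local instance] Finsupp.comapSMul Finsupp.comapMulAction Finsupp.comapDistribMulAction

section DeSmit

/- We model the $G$-stable set $S$ of places of $K$ as a finite $G$-set; the set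
$S(K^H)$ of places of $K^H$ below those of $S$ is the set of $H$-orbits of $S$, and the
degree $f_𝔭$ of a place $𝔭$ of $K^H$ (the residue field degree at a finite, respectively
the local degree at an archimedean, place) is the order of the decomposition group, i.e.
$f_𝔭 = |H|/|\{𝔮 ∈ S : 𝔮 \mid 𝔭\}|$. -/

variable (G : Type) [Group G] [Fintype G] (S : Type) [Fintype S] [MulAction G S]
  (H : Subgroup G)

/-- The set $S(K^H)$ of places below $S$: the $H$-orbits of $S$. -/
noncomputable def placesBelow := Quotient (MulAction.orbitRel H S)

noncomputable instance : Fintype (placesBelow G S H) := by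
  unfold placesBelow; infer_instance

/-- The degree $f_𝔭$ of a place $𝔭 ∈ S(K^H)$ in $K/K^H$: the order of its decomposition
group in $H$, i.e. $|H|$ divided by the number of places of $K$ above $𝔭$. -/
noncomputable def placeDeg (P : placesBelow G S H) : ℕ :=
  Nat.card H / Nat.card {s : S // Quotient.mk (MulAction.orbitRel H S) s = P}

/-- The augmentation map $ℤ[T] → ℤ$. -/
noncomputable def aug (T : Type) : (T →₀ ℤ) →ₗ[ℤ] ℤ :=
  Finsupp.lsum ℤ (fun _ : T => LinearMap.id)

/-- The embedding $ℤ[S(K^H)] → ℤ[S]$ given by $𝔭 ↦ Σ_{𝔮 ∣ 𝔭} f_𝔭 𝔮$. -/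
noncomputable def placesEmb : (placesBelow G S H →₀ ℤ) →ₗ[ℤ] (S →₀ ℤ) :=
  Finsupp.lsum ℤ fun P =>
    LinearMap.toSpanSingleton ℤ (S →₀ ℤ)
      (∑ s : S, if Quotient.mk (MulAction.orbitRel H S) s = P
        then Finsupp.single s (placeDeg G S H P : ℤ) else 0)

end DeSmit

open Finset

section LcmCofactor

variable {Q : Type} [Fintype Q] (f : Q → ℕ)

noncomputable def lcmCofactorMap (P : Q) : ZMod (f P) →+ ZMod (univ.lcm f) :=
  ZMod.lift (f P) ⟨zmultiplesHom _ ((univ.lcm f / f P : ℕ) : ZMod (univ.lcm f)), by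
    rw [zmultiplesHom_apply, natCast_zsmul, nsmul_eq_mul, ← Nat.cast_mul,
      Nat.mul_div_cancel' (dvd_lcm (mem_univ P)), ZMod.natCast_self]⟩

/-- The map `∏_P ℤ/f_P → ℤ/l`, `(r_P) ↦ Σ_P (l / f_P) r_P`, where `l = lcm_P f_P`. -/
noncomputable def lcmCofactorSum : (∀ P, ZMod (f P)) →+ ZMod (univ.lcm f) :=
  ∑ P, (lcmCofactorMap f P).comp (Pi.evalAddMonoidHom (fun P => ZMod (f P)) P)

lemma lcmCofactorSum_intCast (c : Q → ℤ) :
    lcmCofactorSum f (fun P => (c P : ZMod (f P)))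
      = ((∑ P, c P * (univ.lcm f / f P : ℕ) : ℤ) : ZMod (univ.lcm f)) := by
  simp only [lcmCofactorSum, lcmCofactorMap, AddMonoidHom.finsetSum_apply,
    AddMonoidHom.comp_apply, Pi.evalAddMonoidHom_apply, ZMod.lift_coe, zmultiplesHom_apply,
    zsmul_eq_mul, Int.cast_sum, Int.cast_mul, Int.cast_natCast]

lemma eq_one_of_forall_dvd_lcm_div [Nonempty Q] (hf : ∀ P, f P ≠ 0) {e : ℕ}
    (he : ∀ P, e ∣ univ.lcm f / f P) : e = 1 := by
  have hl : univ.lcm f ≠ 0 := lcm_ne_zero_iff.mpr fun P _ => hf P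
  have hel : e ∣ univ.lcm f :=
    (he (Classical.arbitrary Q)).trans (Nat.div_dvd_of_dvd (dvd_lcm (mem_univ _)))
  have hdvd : univ.lcm f ∣ univ.lcm f / e := lcm_dvd fun P _ => by
    refine Nat.dvd_div_of_mul_dvd ?_
    simpa only [Nat.div_mul_cancel (dvd_lcm (mem_univ P))]
      using Nat.mul_dvd_mul_right (he P) (f P)
  have hdiv : univ.lcm f / e = univ.lcm f := Nat.dvd_antisymm (Nat.div_dvd_of_dvd hel) hdvd
  exact (Nat.div_eq_self.mp hdiv).resolve_left hl

lemma exists_sum_mul_lcm_div_eq_one [Nonempty Q] (hf : ∀ P, f P ≠ 0) :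
    ∃ z : Q → ℤ, ∑ P, z P * (univ.lcm f / f P : ℕ) = 1 := by
  obtain ⟨z, hz⟩ := univ.gcd_eq_sum_mul fun P => ((univ.lcm f / f P : ℕ) : ℤ)
  set d := univ.gcd fun P => ((univ.lcm f / f P : ℕ) : ℤ)
  have hd : d.natAbs = 1 := eq_one_of_forall_dvd_lcm_div f hf fun P => by
    simpa only [Int.natAbs_natCast] using Int.natAbs_dvd_natAbs.mpr (gcd_dvd (mem_univ P) : d ∣ _)
  refine ⟨fun P => d * z P, ?_⟩
  calc ∑ P, d * z P * (univ.lcm f / f P : ℕ) = d * d := by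
        rw [hz, mul_sum]; exact sum_congr rfl fun P _ => by ring
    _ = 1 := by rw [← Int.natAbs_mul_self', hd]; rfl

lemma lcmCofactorSum_surjective (hf : ∀ P, f P ≠ 0) :
    Function.Surjective (lcmCofactorSum f) := by
  cases isEmpty_or_nonempty Q
  · have : Subsingleton (ZMod (univ.lcm f)) := by
      rw [univ_eq_empty, lcm_empty]; infer_instance
    exact fun w => ⟨0, Subsingleton.elim _ _⟩
  · obtain ⟨z, hz⟩ := exists_sum_mul_lcm_div_eq_one f hf
    intro w
    obtain ⟨n, rfl⟩ := ZMod.intCast_surjective w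
    refine ⟨fun P => ((n * z P : ℤ) : ZMod (f P)), ?_⟩
    simp only [lcmCofactorSum_intCast, mul_assoc, ← mul_sum, hz, mul_one]

lemma mem_ker_lcmCofactorSum_iff (r : ∀ P, ZMod (f P)) :
    r ∈ (lcmCofactorSum f).ker ↔ ∃ c : Q → ℤ,
      ∑ P, c P * (univ.lcm f / f P : ℕ) = 0 ∧ (fun P => (c P : ZMod (f P))) = r := by
  refine ⟨fun hr => ?_, ?_⟩
  · obtain ⟨a, rfl⟩ : ∃ a : Q → ℤ, (fun P => (a P : ZMod (f P))) = r :=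
      ⟨fun P => (r P).cast, funext fun P => ZMod.intCast_zmod_cast _⟩
    rw [AddMonoidHom.mem_ker, lcmCofactorSum_intCast, ZMod.intCast_zmod_eq_zero_iff_dvd] at hr
    obtain ⟨k, hk⟩ := hr
    cases isEmpty_or_nonempty Q
    · exact ⟨a, by simp, rfl⟩
    obtain ⟨P₀⟩ := ‹Nonempty Q›
    -- Shifting `a P₀` by `k f_{P₀}` kills the sum `l k` and changes no residue.
    refine ⟨a - Pi.single P₀ (k * f P₀), ?_, funext fun P => ?_⟩
    · have hP₀ : (f P₀ * (univ.lcm f / f P₀) : ℕ) = univ.lcm f :=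
        Nat.mul_div_cancel' (dvd_lcm (mem_univ P₀))
      simp only [Pi.sub_apply, sub_mul, sum_sub_distrib, hk, Pi.single_apply, ite_mul, zero_mul,
        sum_ite_eq', mem_univ, if_true]
      rw [mul_assoc, ← Nat.cast_mul, hP₀]; ring
    · by_cases hP : P = P₀
      · subst hP; simp
      · simp [hP]
  · rintro ⟨c, hc, rfl⟩
    rw [AddMonoidHom.mem_ker, lcmCofactorSum_intCast, hc, Int.cast_zero]

lemma card_ker_lcmCofactorSum_mul_lcm (hf : ∀ P, f P ≠ 0) :
    Nat.card (lcmCofactorSum f).ker * univ.lcm f = ∏ P, f P := by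
  have hindex : (lcmCofactorSum f).ker.index = univ.lcm f := by
    rw [AddSubgroup.index_ker, AddMonoidHom.range_eq_top_of_surjective _
      (lcmCofactorSum_surjective f hf), AddSubgroup.card_top, Nat.card_zmod]
  calc Nat.card (lcmCofactorSum f).ker * univ.lcm f
      = (lcmCofactorSum f).ker.index * Nat.card (lcmCofactorSum f).ker := by rw [hindex, mul_comm]
    _ = ∏ P, f P := by simp only [AddSubgroup.index_mul_card, Nat.card_pi, Nat.card_zmod]

end LcmCofactor

theorem Finsupp.comapSMul_apply_smul {Γ α M : Type*} [Group Γ] [MulAction Γ α] [AddCommMonoid M]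
    (g : Γ) (x : α →₀ M) (a : α) : (g • x) (g • a) = x a :=
  Finsupp.mapDomain_apply (MulAction.injective g) x a

lemma aug_apply {T : Type} [Fintype T] (x : T →₀ ℤ) : aug T x = ∑ t, x t := by
  rw [aug, Finsupp.lsum_apply, Finsupp.sum_fintype _ _ fun _ => rfl]
  rfl

section Places

variable {G : Type} [Group G] {S : Type} [MulAction G S] {H : Subgroup G}

noncomputable def numPlacesAbove (P : placesBelow G S H) : ℕ :=
  Nat.card {s : S // Quotient.mk (MulAction.orbitRel H S) s = P}

lemma numPlacesAbove_eq_index (P : placesBelow G S H) :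
    numPlacesAbove P = (MulAction.stabilizer H P.out).index := by
  rw [MulAction.index_stabilizer, ← Nat.card_coe_set_eq]
  refine Nat.card_congr <| Equiv.subtypeEquivRight fun s => ?_
  conv_lhs => rw [← P.out_eq]
  exact Quotient.eq.trans MulAction.orbitRel_apply

lemma placeDeg_eq_card_stabilizer [Finite G] (P : placesBelow G S H) :
    placeDeg G S H P = Nat.card (MulAction.stabilizer H P.out) := by
  rw [placeDeg, ← numPlacesAbove, numPlacesAbove_eq_index, ← Subgroup.card_mul_index,
    Nat.mul_div_cancel _ (Nat.pos_of_ne_zero (Subgroup.index_ne_zero_of_finite))]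

lemma placeDeg_mul_numPlacesAbove [Finite G] (P : placesBelow G S H) :
    placeDeg G S H P * numPlacesAbove P = Nat.card H := by
  rw [placeDeg_eq_card_stabilizer, numPlacesAbove_eq_index, Subgroup.card_mul_index]

lemma placeDeg_ne_zero [Finite G] (P : placesBelow G S H) : placeDeg G S H P ≠ 0 := by
  rw [placeDeg_eq_card_stabilizer]
  exact Nat.card_pos.ne'

lemma lcm_placeDeg_dvd_card [Finite G] [Fintype S] : univ.lcm (placeDeg G S H) ∣ Nat.card H :=
  lcm_dvd fun P _ => Dvd.intro _ (placeDeg_mul_numPlacesAbove P)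

lemma numPlacesAbove_eq [Finite G] [Fintype S] (P : placesBelow G S H) :
    numPlacesAbove P =
      Nat.card H / univ.lcm (placeDeg G S H) * (univ.lcm (placeDeg G S H) / placeDeg G S H P) := by
  refine Nat.eq_of_mul_eq_mul_left (Nat.pos_of_ne_zero (placeDeg_ne_zero P)) ?_
  rw [placeDeg_mul_numPlacesAbove, mul_left_comm, Nat.mul_div_cancel' (dvd_lcm (mem_univ P)),
    Nat.div_mul_cancel lcm_placeDeg_dvd_card]

lemma mem_fixedPts_iff (x : S →₀ ℤ) :
    x ∈ fixedPts G (S →₀ ℤ) H ↔ ∀ s t,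
      Quotient.mk (MulAction.orbitRel H S) s = Quotient.mk (MulAction.orbitRel H S) t →
        x s = x t := by
  refine ⟨fun hx s t hst => ?_, fun hx h hh => Finsupp.ext fun s => ?_⟩
  · obtain ⟨h, rfl⟩ := MulAction.orbitRel_apply.mp (Quotient.eq.mp hst)
    change x ((h : G) • t) = x t
    rw [← Finsupp.comapSMul_apply_smul (h : G) x t, hx h h.2]
  · have hinv := Finsupp.comapSMul_apply_smul h x (h⁻¹ • s)
    rw [smul_inv_smul] at hinv
    rw [hinv]
    exact hx _ _ (Quotient.sound ⟨⟨h⁻¹, inv_mem hh⟩, rfl⟩)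

lemma apply_out_eq_of_mem_fixedPts {x : S →₀ ℤ} (hx : x ∈ fixedPts G (S →₀ ℤ) H) (s : S) :
    x (Quotient.mk (MulAction.orbitRel H S) s).out = x s :=
  (mem_fixedPts_iff x).mp hx _ _ (Quotient.out_eq _)

lemma sum_eq_sum_numPlacesAbove_mul [Fintype S] {x : S →₀ ℤ} (hx : x ∈ fixedPts G (S →₀ ℤ) H) :
    ∑ s, x s = ∑ P : placesBelow G S H, (numPlacesAbove P : ℤ) * x P.out := by
  rw [← sum_fiberwise univ (fun s => Quotient.mk (MulAction.orbitRel H S) s)]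
  refine sum_congr rfl fun P _ => ?_
  have hconst : ∀ s ∈ univ.filter fun s => Quotient.mk (MulAction.orbitRel H S) s = P,
      x s = x P.out := fun s hs => by
    rw [← (mem_filter.mp hs).2, apply_out_eq_of_mem_fixedPts hx]
  rw [sum_congr rfl hconst, sum_const, nsmul_eq_mul]
  simp only [numPlacesAbove, Nat.card_eq_fintype_card, Fintype.card_subtype]

lemma aug_eq_zero_iff_of_mem_fixedPts [Finite G] [Fintype S] {x : S →₀ ℤ}
    (hx : x ∈ fixedPts G (S →₀ ℤ) H) :
    aug S x = 0 ↔ ∑ P, x P.out * (univ.lcm (placeDeg G S H) / placeDeg G S H P : ℕ) = 0 := by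
  have hcard : Nat.card H / univ.lcm (placeDeg G S H) ≠ 0 :=
    (Nat.div_ne_zero_iff_of_dvd lcm_placeDeg_dvd_card).mpr
      ⟨Nat.card_pos.ne', lcm_ne_zero_iff.mpr fun P _ => placeDeg_ne_zero P⟩
  have hsum : aug S x = (Nat.card H / univ.lcm (placeDeg G S H) : ℕ)
      * ∑ P, x P.out * (univ.lcm (placeDeg G S H) / placeDeg G S H P : ℕ) := by
    rw [aug_apply, sum_eq_sum_numPlacesAbove_mul hx, mul_sum]
    refine sum_congr rfl fun P _ => ?_
    rw [numPlacesAbove_eq]; push_cast; ring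
  rw [hsum, mul_eq_zero, or_iff_right (by exact_mod_cast hcard)]

lemma placesEmb_apply [Fintype S] (y : placesBelow G S H →₀ ℤ) (s : S) :
    placesEmb G S H y s = placeDeg G S H (Quotient.mk (MulAction.orbitRel H S) s)
      * y (Quotient.mk (MulAction.orbitRel H S) s) := by
  simp only [placesEmb, Finsupp.lsum_apply, LinearMap.toSpanSingleton_apply, zero_smul,
    implies_true, Finsupp.sum_fintype, Finsupp.coe_smul, Finsupp.coe_finsetSum, Pi.smul_apply,
    Finset.sum_apply, apply_ite (fun g : S →₀ ℤ => g s), Finsupp.single_apply, Finsupp.coe_zero,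
    Pi.zero_apply, ← ite_and, and_comm, smul_eq_mul]
  simp only [ite_and, sum_ite_eq', mem_univ, if_true, mul_ite, mul_zero]
  exact (Fintype.sum_eq_single _ fun P hP => if_neg (Ne.symm hP)).trans
    ((if_pos rfl).trans (mul_comm _ _))

noncomputable def reduceAtPlaces :
    ↥(LinearMap.ker (aug S) ⊓ fixedPts G (S →₀ ℤ) H) →ₗ[ℤ]
      ∀ P : placesBelow G S H, ZMod (placeDeg G S H P) :=
  LinearMap.pi fun P => (Int.castAddHom (ZMod (placeDeg G S H P))).toIntLinearMap ∘ₗ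
    Finsupp.lapply P.out ∘ₗ Submodule.subtype _

lemma reduceAtPlaces_apply (x : ↥(LinearMap.ker (aug S) ⊓ fixedPts G (S →₀ ℤ) H)) :
    reduceAtPlaces x = fun P => ((x : S →₀ ℤ) P.out : ZMod (placeDeg G S H P)) :=
  rfl

lemma mem_map_placesEmb_iff [Finite G] [Fintype S] {x : S →₀ ℤ}
    (hx : x ∈ LinearMap.ker (aug S) ⊓ fixedPts G (S →₀ ℤ) H) :
    x ∈ (LinearMap.ker (aug (placesBelow G S H))).map (placesEmb G S H) ↔
      ∀ P, (placeDeg G S H P : ℤ) ∣ x P.out := by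
  refine ⟨?_, fun hdvd => ?_⟩
  · rintro ⟨y, -, rfl⟩ P
    rw [placesEmb_apply, show Quotient.mk (MulAction.orbitRel H S) P.out = P from P.out_eq]
    exact dvd_mul_right _ _
  set y : placesBelow G S H →₀ ℤ :=
    Finsupp.equivFunOnFinite.symm fun P => x P.out / placeDeg G S H P
  have hy : placesEmb G S H y = x := Finsupp.ext fun s => by
    rw [placesEmb_apply]
    exact (Int.mul_ediv_cancel' (hdvd _)).trans (apply_out_eq_of_mem_fixedPts hx.2 s)
  refine ⟨y, ?_, hy⟩
  have hl : ((univ.lcm (placeDeg G S H) : ℕ) : ℤ) ≠ 0 :=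
    Nat.cast_ne_zero.mpr (lcm_ne_zero_iff.mpr fun P _ => placeDeg_ne_zero P)
  rw [SetLike.mem_coe, LinearMap.mem_ker, aug_apply]
  refine (mul_eq_zero.mp ?_).resolve_left hl
  rw [mul_sum, ← (aug_eq_zero_iff_of_mem_fixedPts hx.2).mp hx.1]
  refine sum_congr rfl fun P _ => ?_
  obtain ⟨k, hk⟩ := hdvd P
  change _ * (x P.out / _) = _
  rw [hk, Int.mul_ediv_cancel_left _ (Nat.cast_ne_zero.mpr (placeDeg_ne_zero P)), mul_right_comm,
    ← Nat.cast_mul, Nat.mul_div_cancel' (dvd_lcm (mem_univ P)), mul_comm]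

lemma ker_reduceAtPlaces [Finite G] [Fintype S] :
    LinearMap.ker reduceAtPlaces =
      ((LinearMap.ker (aug (placesBelow G S H))).map (placesEmb G S H)).comap
        (LinearMap.ker (aug S) ⊓ fixedPts G (S →₀ ℤ) H).subtype := by
  ext x
  rw [LinearMap.mem_ker, Submodule.mem_comap, Submodule.subtype_apply, mem_map_placesEmb_iff x.2,
    reduceAtPlaces_apply, funext_iff]
  simp only [Pi.zero_apply, ZMod.intCast_zmod_eq_zero_iff_dvd]

lemma mem_range_reduceAtPlaces_iff [Finite G] [Fintype S]
    (r : ∀ P : placesBelow G S H, ZMod (placeDeg G S H P)) :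
    r ∈ LinearMap.range reduceAtPlaces ↔ r ∈ (lcmCofactorSum (placeDeg G S H)).ker := by
  rw [mem_ker_lcmCofactorSum_iff]
  constructor
  · rintro ⟨x, rfl⟩
    exact ⟨fun P => (x : S →₀ ℤ) P.out, (aug_eq_zero_iff_of_mem_fixedPts x.2.2).mp x.2.1, rfl⟩
  · rintro ⟨c, hc, rfl⟩
    set x : S →₀ ℤ := Finsupp.equivFunOnFinite.symm fun s => c (Quotient.mk _ s)
    have hxc : ∀ P, x P.out = c P := fun P => congrArg c P.out_eq
    have hfix : x ∈ fixedPts G (S →₀ ℤ) H :=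
      (mem_fixedPts_iff x).mpr fun s t hst => congrArg c hst
    have haug : x ∈ LinearMap.ker (aug S) :=
      (aug_eq_zero_iff_of_mem_fixedPts hfix).mpr (by simpa only [hxc] using hc)
    exact ⟨⟨x, Submodule.mem_inf.mpr ⟨haug, hfix⟩⟩, funext fun P => congrArg Int.cast (hxc P)⟩

end Places

section DeSmit

variable (G : Type) [Group G] [Fintype G] (S : Type) [Fintype S] [MulAction G S]
  (H : Subgroup G)

/-- de Smit. Under the embedding $ℤ[S(K^H)] → ℤ[S]$,
$𝔭 ↦ Σ_{𝔮∣𝔭} f_𝔭 𝔮$, the index of $I_{K^H,S}$ in $(I_{K,S})^H$ equals $n(H)/l(H)$, where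
$I_{·,S}$ is the kernel of the augmentation map, $n(H) = ∏_{𝔭 ∈ S(K^H)} f_𝔭$ and
$l(H) = \mathrm{lcm}\{f_𝔭 : 𝔭 ∈ S(K^H)\}$. -/
theorem stmt18 :
    Nat.card
        (↥(LinearMap.ker (aug S) ⊓ fixedPts G (S →₀ ℤ) H) ⧸
          Submodule.comap (LinearMap.ker (aug S) ⊓ fixedPts G (S →₀ ℤ) H).subtype
            (Submodule.map (placesEmb G S H) (LinearMap.ker (aug (placesBelow G S H)))))
      * (Finset.univ : Finset (placesBelow G S H)).lcm (placeDeg G S H)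
    = ∏ P : placesBelow G S H, placeDeg G S H P := by
  calc _ = Nat.card (LinearMap.range (reduceAtPlaces (G := G) (S := S) (H := H)))
        * univ.lcm (placeDeg G S H) := by
        rw [← ker_reduceAtPlaces, Nat.card_congr (LinearMap.quotKerEquivRange _).toEquiv]
    _ = Nat.card (lcmCofactorSum (placeDeg G S H)).ker * univ.lcm (placeDeg G S H) := by
        rw [Nat.card_congr (Equiv.subtypeEquivRight mem_range_reduceAtPlaces_iff)]
    _ = _ := card_ker_lcmCofactorSum_mul_lcm _ placeDeg_ne_zero

end DeSmit
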